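/- Rod lemma: Let R ⊆ ℝ² and let c : ℝ² → Fin 2 be a coloring such that any two points of R at distance 1 get distinct colors. Suppose γ, δ : [0,1] → interior(R) are continuous paths with ‖γ(t) - δ(t)‖ = 1 for all t (a continuously sliding rod). Then c(γ(0)) = c(γ(1)), i.e., each endpoint of the rod sweeps out a monochromatic set. -/

import Mathlib

/-!
If `a, b ∈ interior R` are at distance 1, then `c` is constant near `a`. Write `p - a = u w`
with `u = b - a`. The vectors `A = 2 - ‖w‖ + w` and `B = 2 - ‖w‖` have length at most 2 and tend
to 2 as `p → a`, so each is a sum of two unit vectors close to 1. Since `w = A - B`, this gives a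
chain `a, q₁, r, q₂, p` of unit steps with `q₁, q₂` near `b` and `r` near `a`, hence inside `R`.
With two colours the colours alternate along the chain, so `c p = c a`. Thus `c ∘ γ` is continuous
on `[0, 1]` with values in a discrete space, hence constant.
-/

open Filter Topology

namespace Complex

noncomputable def unitSummand (A : ℂ) : ℂ := A / 2 + I * (A / ‖A‖) * √(1 - ‖A‖ ^ 2 / 4)

lemma norm_half_add_I_mul_eq_one {A : ℂ} (hA : A ≠ 0) {r : ℝ} (hr : r ^ 2 = 1 - ‖A‖ ^ 2 / 4) :
    ‖A / 2 + I * (A / ‖A‖) * r‖ = 1 := by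
  have hn : (‖A‖ : ℂ) ≠ 0 := by exact_mod_cast norm_ne_zero_iff.mpr hA
  have : A / 2 + I * (A / ‖A‖) * r = (A / ‖A‖) * ((‖A‖ / 2 : ℝ) + r * I) := by
    push_cast
    field_simp
  rw [this, norm_mul, norm_add_mul_I, hr, norm_div, norm_real, norm_norm,
    div_self (norm_ne_zero_iff.mpr hA)]
  ring_nf
  exact Real.sqrt_one

variable {A : ℂ}

lemma norm_unitSummand (hA : A ≠ 0) (hA2 : ‖A‖ ≤ 2) : ‖unitSummand A‖ = 1 :=
  norm_half_add_I_mul_eq_one hA (Real.sq_sqrt (by nlinarith [norm_nonneg A]))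

lemma norm_sub_unitSummand (hA : A ≠ 0) (hA2 : ‖A‖ ≤ 2) : ‖A - unitSummand A‖ = 1 := by
  have h := norm_half_add_I_mul_eq_one hA (r := -√(1 - ‖A‖ ^ 2 / 4))
    (by rw [neg_sq, Real.sq_sqrt (by nlinarith [norm_nonneg A])])
  rw [← h, unitSummand]
  congr 1
  push_cast
  ring

lemma continuousAt_unitSummand (hA : A ≠ 0) : ContinuousAt unitSummand A := by
  unfold unitSummand
  have : (‖A‖ : ℂ) ≠ 0 := by exact_mod_cast norm_ne_zero_iff.mpr hA
  fun_prop (disch := assumption)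

@[simp]
lemma unitSummand_two : unitSummand 2 = 1 := by
  norm_num [unitSummand]

lemma norm_two_sub_ofReal_norm {w : ℂ} (hw : ‖w‖ ≤ 2) : ‖(2 - ‖w‖ : ℂ)‖ = 2 - ‖w‖ := by
  rw [← ofReal_ofNat, ← ofReal_sub, norm_real, Real.norm_of_nonneg (by linarith)]

end Complex

open Complex

lemma Fin.two_eq_of_ne_of_ne {x y z : Fin 2} (hxy : x ≠ y) (hyz : y ≠ z) : x = z := by
  omega

lemma color_eq_of_unit_chain {E : Type*} [SeminormedAddGroup E] {R : Set E} {c : E → Fin 2}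
    (hproper : ∀ p ∈ R, ∀ q ∈ R, ‖p - q‖ = 1 → c p ≠ c q) {p q r : E}
    (hp : p ∈ R) (hq : q ∈ R) (hr : r ∈ R) (hpq : ‖p - q‖ = 1) (hqr : ‖q - r‖ = 1) :
    c p = c r :=
  Fin.two_eq_of_ne_of_ne (hproper p hp q hq hpq) (hproper q hq r hr hqr)

lemma eventually_exists_unit_chain {a b : ℂ} (hab : ‖b - a‖ = 1) {U V : Set ℂ}
    (hU : U ∈ 𝓝 a) (hV : V ∈ 𝓝 b) :
    ∀ᶠ p in 𝓝 a, ∃ q₁ ∈ V, ∃ r ∈ U, ∃ q₂ ∈ V,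
      ‖p - q₂‖ = 1 ∧ ‖q₂ - r‖ = 1 ∧ ‖r - q₁‖ = 1 ∧ ‖q₁ - a‖ = 1 := by
  set u := b - a
  have hu : u ≠ 0 := norm_ne_zero_iff.mp (by rw [hab]; exact one_ne_zero)
  have norm_u_mul (z : ℂ) : ‖u * z‖ = ‖z‖ := by rw [norm_mul, hab, one_mul]
  set w : ℂ → ℂ := fun p ↦ (p - a) / u
  set A : ℂ → ℂ := fun p ↦ 2 - ‖w p‖ + w p
  set B : ℂ → ℂ := fun p ↦ 2 - ‖w p‖
  have hA : Tendsto A (𝓝 a) (𝓝 2) := by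
    have : Continuous A := by fun_prop
    simpa [A, w] using this.tendsto a
  have hB : Tendsto B (𝓝 a) (𝓝 2) := by
    have : Continuous B := by fun_prop
    simpa [B, w] using this.tendsto a
  have hzA : Tendsto (fun p ↦ unitSummand (A p)) (𝓝 a) (𝓝 1) :=
    unitSummand_two ▸ (continuousAt_unitSummand two_ne_zero).tendsto.comp hA
  have hzB : Tendsto (fun p ↦ unitSummand (B p)) (𝓝 a) (𝓝 1) :=
    unitSummand_two ▸ (continuousAt_unitSummand two_ne_zero).tendsto.comp hB
  set q₁ : ℂ → ℂ := fun p ↦ a + u * unitSummand (A p)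
  set r : ℂ → ℂ := fun p ↦ q₁ p - u * unitSummand (B p)
  set q₂ : ℂ → ℂ := fun p ↦ r p + u * (A p - unitSummand (A p))
  have hq₁ : Tendsto q₁ (𝓝 a) (𝓝 b) := by
    convert (tendsto_const_nhds (x := a)).add (hzA.const_mul u) using 2
    simp [u]
  have hr : Tendsto r (𝓝 a) (𝓝 a) := by
    convert hq₁.sub (hzB.const_mul u) using 2
    simp [u]
  have hq₂ : Tendsto q₂ (𝓝 a) (𝓝 b) := by
    convert hr.add ((hA.sub hzA).const_mul u) using 2
    norm_num [u]
  filter_upwards [Metric.closedBall_mem_nhds a zero_lt_one, hA.eventually_ne two_ne_zero,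
    hB.eventually_ne two_ne_zero, hq₁.eventually_mem hV, hr.eventually_mem hU,
    hq₂.eventually_mem hV] with p hwp hA0 hB0 hq₁p hrp hq₂p
  replace hwp : ‖w p‖ ≤ 1 := by
    simpa [w, norm_div, hab, ← dist_eq_norm] using hwp
  have hB2 : ‖B p‖ ≤ 2 := by
    rw [norm_two_sub_ofReal_norm (by linarith)]
    linarith [norm_nonneg (w p)]
  have hA2 : ‖A p‖ ≤ 2 :=
    (norm_add_le _ _).trans (by rw [norm_two_sub_ofReal_norm (by linarith), sub_add_cancel])
  have hp_eq : q₂ p - p = u * (B p - unitSummand (B p)) := by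
    simp only [q₂, r, q₁, A, B, w]
    field_simp
    ring
  refine ⟨q₁ p, hq₁p, r p, hrp, q₂ p, hq₂p, ?_, ?_, ?_, ?_⟩
  · rw [norm_sub_rev, hp_eq, norm_u_mul, norm_sub_unitSummand hB0 hB2]
  · simp only [q₂, add_sub_cancel_left, norm_u_mul, norm_sub_unitSummand hA0 hA2]
  · simp only [r, sub_sub_cancel_left, norm_neg, norm_u_mul, norm_unitSummand hB0 hB2]
  · simp only [q₁, add_sub_cancel_left, norm_u_mul, norm_unitSummand hA0 hA2]

lemma eventually_color_eq {R : Set ℂ} {c : ℂ → Fin 2}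
    (hproper : ∀ p ∈ R, ∀ q ∈ R, ‖p - q‖ = 1 → c p ≠ c q) {a b : ℂ}
    (ha : a ∈ interior R) (hb : b ∈ interior R) (hab : ‖b - a‖ = 1) :
    ∀ᶠ p in 𝓝 a, c p = c a := by
  rw [mem_interior_iff_mem_nhds] at ha hb
  filter_upwards [ha, eventually_exists_unit_chain hab ha hb]
    with p hp ⟨q₁, hq₁, r, hr, q₂, hq₂, hpq₂, hq₂r, hrq₁, hq₁a⟩
  exact (color_eq_of_unit_chain hproper hp hq₂ hr hpq₂ hq₂r).trans
    (color_eq_of_unit_chain hproper hr hq₁ (mem_of_mem_nhds ha) hrq₁ hq₁a)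

theorem rod_lemma (R : Set ℂ) (c : ℂ → Fin 2)
    (hproper : ∀ p ∈ R, ∀ q ∈ R, ‖p - q‖ = 1 → c p ≠ c q)
    (γ δ : ℝ → ℂ)
    (hγ : ContinuousOn γ (Set.Icc 0 1))
    (hγR : ∀ t ∈ Set.Icc (0 : ℝ) 1, γ t ∈ interior R)
    (hδR : ∀ t ∈ Set.Icc (0 : ℝ) 1, δ t ∈ interior R)
    (hrod : ∀ t ∈ Set.Icc (0 : ℝ) 1, ‖γ t - δ t‖ = 1) :
    c (γ 0) = c (γ 1) := by
  have hc : ContinuousOn (c ∘ γ) (Set.Icc 0 1) := fun t ht ↦ by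
    have hct : ContinuousAt c (γ t) := by
      rw [ContinuousAt, nhds_discrete (Fin 2), tendsto_pure]
      exact eventually_color_eq hproper (hγR t ht) (hδR t ht) (by rw [norm_sub_rev, hrod t ht])
    exact hct.comp_continuousWithinAt (hγ t ht)
  exact isPreconnected_Icc.constant hc (by norm_num) (by norm_num)
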